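/- Let ξ_o < ξ_i be positive reals, n ≥ 1 an integer, ε_m > 0, ε_s > 0 with ε_s ≠ ε_m, and λ = (ε_m + ε_s)/(2(ε_m − ε_s)). Then (1+2λ) cosh(nξ_o) e^{n(ξ_o+ξ_i)} − sinh(nξ_i)(e^{2nξ_o} − e^{2nξ_i}) = 0 if and only if ε_s = coth(nξ_i) coth(n(ξ_i − ξ_o)) ε_m. -/

import Mathlib

noncomputable def coth (x : ℝ) : ℝ := Real.cosh x / Real.sinh x

/-!
With `a = nξᵢ` and `b = n(ξᵢ - ξₒ)` one has `1 + 2λ = 2εₘ / (εₘ - ε_s)`,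
`e^{2nξₒ} - e^{2nξᵢ} = -2 e^{n(ξₒ+ξᵢ)} sinh b` and `cosh (nξₒ) = cosh a cosh b - sinh a sinh b`,
so the left-hand side equals `2 e^{n(ξₒ+ξᵢ)} / (εₘ - ε_s) · (εₘ cosh a cosh b - ε_s sinh a sinh b)`.
Since `a, b > 0`, the sinh factors do not vanish and the bracket is zero exactly when
`ε_s = coth a coth b εₘ`.
-/

open Real

theorem exp_two_mul_sub_exp_two_mul (x y : ℝ) :
    exp (2 * x) - exp (2 * y) = -2 * exp (x + y) * sinh (y - x) := by
  have h2y : exp (x + y) * exp (y - x) = exp (2 * y) := by rw [← exp_add]; ring_nf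
  have h2x : exp (x + y) * exp (-(y - x)) = exp (2 * x) := by rw [← exp_add]; ring_nf
  rw [sinh_eq]
  linear_combination h2y - h2x

theorem one_add_two_mul_div_two_mul_sub {m s : ℝ} (hms : m ≠ s) :
    1 + 2 * ((m + s) / (2 * (m - s))) = 2 * m / (m - s) := by
  field_simp [sub_ne_zero.mpr hms]
  ring

theorem one_add_two_mul_cosh_mul_exp_sub_sinh_mul_eq {m s : ℝ} (hms : m ≠ s) (x y : ℝ) :
    (1 + 2 * ((m + s) / (2 * (m - s)))) * cosh x * exp (x + y)
        - sinh y * (exp (2 * x) - exp (2 * y)) =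
      2 * exp (x + y) / (m - s) * (m * cosh y * cosh (y - x) - s * sinh y * sinh (y - x)) := by
  have hcosh : cosh x = cosh y * cosh (y - x) - sinh y * sinh (y - x) := by
    rw [← cosh_sub, sub_sub_cancel]
  rw [one_add_two_mul_div_two_mul_sub hms, exp_two_mul_sub_exp_two_mul, hcosh]
  field_simp [sub_ne_zero.mpr hms]
  ring

theorem eq_coth_mul_coth_mul_iff {a b : ℝ} (ha : a ≠ 0) (hb : b ≠ 0) (m s : ℝ) :
    s = coth a * coth b * m ↔ m * cosh a * cosh b - s * sinh a * sinh b = 0 := by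
  have hsinh : sinh a * sinh b ≠ 0 := mul_ne_zero (sinh_ne_zero.mpr ha) (sinh_ne_zero.mpr hb)
  rw [coth, coth, div_mul_div_comm, div_mul_eq_mul_div, eq_div_iff hsinh, sub_eq_zero]
  constructor <;> intro h <;> linear_combination -h

theorem stmt4_general (ξo ξi εm εs : ℝ) (n : ℕ) (h1 : 0 < ξo) (h2 : ξo < ξi) (hn : 1 ≤ n)
    (hne : εs ≠ εm)
    (lam : ℝ) (hlam : lam = (εm + εs) / (2 * (εm - εs))) :
    (1 + 2 * lam) * Real.cosh (n * ξo) * Real.exp (n * (ξo + ξi)) -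
        Real.sinh (n * ξi) * (Real.exp (2 * n * ξo) - Real.exp (2 * n * ξi)) = 0 ↔
      εs = coth (n * ξi) * coth (n * (ξi - ξo)) * εm := by
  have hnpos : (0 : ℝ) < n := by exact_mod_cast hn
  have ha : (n : ℝ) * ξi ≠ 0 := (mul_pos hnpos (h1.trans h2)).ne'
  have hb : (n : ℝ) * (ξi - ξo) ≠ 0 := (mul_pos hnpos (sub_pos.mpr h2)).ne'
  have hscale : 2 * exp (n * (ξo + ξi)) / (εm - εs) ≠ 0 :=
    div_ne_zero (by positivity) (sub_ne_zero.mpr hne.symm)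
  have hfactor := one_add_two_mul_cosh_mul_exp_sub_sinh_mul_eq hne.symm (n * ξo) (n * ξi)
  rw [← mul_add, ← mul_assoc 2 (n : ℝ) ξo, ← mul_assoc 2 (n : ℝ) ξi, ← mul_sub (n : ℝ) ξi ξo]
    at hfactor
  rw [hlam, hfactor, mul_eq_zero, or_iff_right hscale, eq_coth_mul_coth_mul_iff ha hb]

theorem stmt4 (ξo ξi εm εs : ℝ) (n : ℕ) (h1 : 0 < ξo) (h2 : ξo < ξi) (hn : 1 ≤ n)
    (hεm : 0 < εm) (hεs : 0 < εs) (hne : εs ≠ εm)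
    (lam : ℝ) (hlam : lam = (εm + εs) / (2 * (εm - εs))) :
    (1 + 2 * lam) * Real.cosh (n * ξo) * Real.exp (n * (ξo + ξi)) -
        Real.sinh (n * ξi) * (Real.exp (2 * n * ξo) - Real.exp (2 * n * ξi)) = 0 ↔
      εs = coth (n * ξi) * coth (n * (ξi - ξo)) * εm :=
  stmt4_general ξo ξi εm εs n h1 h2 hn hne lam hlam
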